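/- In a polar algebra, tr(L(x)²) = h(x₀,x₀)·dim A₁ + 2·h(x₁,x₁)·dim A₀ for all x = x₀ + x₁ with x₀ ∈ A₀, x₁ ∈ A₁. -/

import Mathlib

/-!
Split `A = A₀ ⊕ A₁` with projections `π₀, π₁`. For `x₀ ∈ A₀`, `L(x₀)²` kills `A₀` and is
`h(x₀,x₀)` on `A₁` by the polar identity, so it equals `h(x₀,x₀) π₁`. For `x₁ ∈ A₁`, `L(x₁)` and
the cross terms `L(x₀)L(x₁)`, `L(x₁)L(x₀)` exchange `A₀` and `A₁`, and such maps are traceless.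
Polarizing the polar identity and using the invariance of `h` gives `L(x₁)² = h(x₁,x₁)` on `A₀`;
since `π₁ L(x₁) = L(x₁) π₀`, cyclicity of the trace makes the `A₁`-block of `L(x₁)²` contribute
as much as its `A₀`-block, which gives `2 h(x₁,x₁) dim A₀`.
-/

open Module Submodule

namespace LinearMap

variable {K V : Type*} [Field K] [AddCommGroup V] [Module K V]
  {U W : Submodule K V} {f : V →ₗ[K] V}

theorem trace_eq_trace_projection_comp_add (hUW : IsCompl U W) :
    trace K V f =
      trace K V (U.projection W hUW ∘ₗ f) + trace K V (W.projection U hUW.symm ∘ₗ f) := by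
  rw [← map_add, ← add_comp, projection_add_projection_eq_id, id_comp]

variable [FiniteDimensional K V]

theorem trace_projection (hUW : IsCompl U W) :
    trace K V (U.projection W hUW) = finrank K U := by
  rw [Submodule.projection, trace_comp_comm', projectionOnto_comp_subtype, trace_id]

theorem trace_projection_comp_eq_zero (hUW : IsCompl U W) (hf : Set.MapsTo f U W) :
    trace K V (U.projection W hUW ∘ₗ f) = 0 := by
  set π := U.projection W hUW
  have hπfπ : π ∘ₗ f ∘ₗ π = 0 := by
    ext x
    exact projection_apply_of_mem_right hUW (hf (projection_apply_mem hUW x))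
  have hππ : π ∘ₗ π = π := (isIdempotentElem_projection hUW).eq
  calc trace K V (π ∘ₗ f) = trace K V (π ∘ₗ π ∘ₗ f) := by rw [← comp_assoc, hππ]
    _ = trace K V (π ∘ₗ f ∘ₗ π) := by rw [trace_comp_comm', comp_assoc]
    _ = 0 := by rw [hπfπ, map_zero]

theorem trace_eq_zero_of_mapsTo_swap (hUW : IsCompl U W) (hU : Set.MapsTo f U W)
    (hW : Set.MapsTo f W U) : trace K V f = 0 := by
  rw [trace_eq_trace_projection_comp_add hUW, trace_projection_comp_eq_zero hUW hU,
    trace_projection_comp_eq_zero hUW.symm hW, add_zero]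

theorem trace_eq_mul_finrank_of_eqOn (hUW : IsCompl U W) {c : K} (hU : ∀ u ∈ U, f u = 0)
    (hW : ∀ w ∈ W, f w = c • w) : trace K V f = c * finrank K W := by
  have hf : f = c • W.projection U hUW.symm :=
    ext_on_codisjoint hUW.codisjoint
      (fun u hu ↦ by simp [hU u hu, projection_apply_of_mem_right hUW.symm hu])
      (fun w hw ↦ by simp [hW w hw, projection_apply_of_mem_left hUW.symm hw])
  rw [hf, map_smul, trace_projection, smul_eq_mul]

theorem trace_comp_self_of_mapsTo_swap (hUW : IsCompl U W) {c : K} (hU : Set.MapsTo f U W)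
    (hW : Set.MapsTo f W U) (hsq : ∀ u ∈ U, f (f u) = c • u) :
    trace K V (f ∘ₗ f) = 2 * c * finrank K U := by
  set πU := U.projection W hUW
  set πW := W.projection U hUW.symm
  have hswap : πW ∘ₗ f = f ∘ₗ πU :=
    ext_on_codisjoint hUW.codisjoint
      (fun u hu ↦ by simp [πU, πW, projection_apply_of_mem_left hUW.symm (hU hu),
        projection_apply_of_mem_left hUW hu])
      (fun w hw ↦ by simp [πU, πW, projection_apply_of_mem_right hUW.symm (hW hw),
        projection_apply_of_mem_right hUW hw])
  have hdiag : πU ∘ₗ f ∘ₗ f = c • πU :=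
    ext_on_codisjoint hUW.codisjoint
      (fun u hu ↦ by simp [πU, hsq u hu, projection_apply_of_mem_left hUW hu,
        projection_apply_of_mem_left hUW (U.smul_mem c hu)])
      (fun w hw ↦ by simp [πU, projection_apply_of_mem_right hUW (hU (hW hw)),
        projection_apply_of_mem_right hUW hw])
  have hblocks : trace K V (πW ∘ₗ f ∘ₗ f) = trace K V (πU ∘ₗ f ∘ₗ f) := by
    rw [← comp_assoc, hswap, comp_assoc, trace_comp_comm', comp_assoc]
  rw [trace_eq_trace_projection_comp_add hUW, hblocks, hdiag, map_smul, trace_projection,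
    smul_eq_mul]
  ring

end LinearMap

structure IsPolarAlgebra {A : Type*} [AddCommGroup A] [Module ℝ A]
    (mul : A →ₗ[ℝ] A →ₗ[ℝ] A) (h : A →ₗ[ℝ] A →ₗ[ℝ] ℝ) (A₀ A₁ : Submodule ℝ A) : Prop where
  mul_comm : ∀ x y, mul x y = mul y x
  symm : ∀ x y, h x y = h y x
  pos : ∀ x, x ≠ 0 → 0 < h x x
  invariant : ∀ x y z, h (mul x y) z = h x (mul y z)
  isCompl : IsCompl A₀ A₁
  orthogonal : ∀ x ∈ A₀, ∀ y ∈ A₁, h x y = 0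
  mul₀₀ : ∀ x ∈ A₀, ∀ y ∈ A₀, mul x y = 0
  mul₁₁_mem : ∀ x ∈ A₁, ∀ y ∈ A₁, mul x y ∈ A₀
  polar : ∀ x ∈ A₀, ∀ y ∈ A₁, mul x (mul x y) = h x x • y

namespace IsPolarAlgebra

variable {A : Type*} [AddCommGroup A] [Module ℝ A] {mul : A →ₗ[ℝ] A →ₗ[ℝ] A}
  {h : A →ₗ[ℝ] A →ₗ[ℝ] ℝ} {A₀ A₁ : Submodule ℝ A}

theorem eq_zero_of_apply_self (P : IsPolarAlgebra mul h A₀ A₁) {v : A} (hv : h v v = 0) :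
    v = 0 := by
  by_contra hne
  exact (P.pos v hne).ne' hv

theorem mem₁_of_orthogonal (P : IsPolarAlgebra mul h A₀ A₁) {v : A}
    (hv : ∀ a ∈ A₀, h v a = 0) : v ∈ A₁ := by
  have hv' : v ∈ A₀ ⊔ A₁ := P.isCompl.sup_eq_top ▸ Submodule.mem_top
  obtain ⟨a, ha, b, hb, rfl⟩ := Submodule.mem_sup.mp hv'
  have haa : h a a = 0 := by
    have := hv a ha
    rwa [map_add, LinearMap.add_apply, P.symm b, P.orthogonal a ha b hb, add_zero] at this
  rwa [P.eq_zero_of_apply_self haa, zero_add]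

theorem mul_mem₁ (P : IsPolarAlgebra mul h A₀ A₁) {x : A} (hx : x ∈ A₀) (y : A) :
    mul x y ∈ A₁ :=
  P.mem₁_of_orthogonal fun a ha ↦ by rw [P.mul_comm, P.invariant, P.mul₀₀ x hx a ha, map_zero]

theorem polar_polarized (P : IsPolarAlgebra mul h A₀ A₁) {a b y : A} (ha : a ∈ A₀)
    (hb : b ∈ A₀) (hy : y ∈ A₁) :
    mul a (mul b y) + mul b (mul a y) = (2 * h a b) • y := by
  have hab := P.polar (a + b) (A₀.add_mem ha hb) y hy
  simp only [map_add, LinearMap.add_apply, P.symm b a] at hab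
  linear_combination (norm := module) hab - P.polar a ha y hy - P.polar b hb y hy

theorem mul_mul_of_mem₁_of_mem₀ (P : IsPolarAlgebra mul h A₀ A₁) {x a : A} (hx : x ∈ A₁)
    (ha : a ∈ A₀) : mul x (mul x a) = h x x • a := by
  have hform : ∀ b ∈ A₀, h (mul x (mul x a)) b = h x x * h a b := by
    intro b hb
    have hab : h x (mul a (mul b x)) = h (mul x a) (mul x b) := by
      rw [← P.invariant, P.mul_comm b]
    have hba : h x (mul b (mul a x)) = h (mul x a) (mul x b) := by
      rw [← P.invariant, P.mul_comm a, P.symm]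
    have hpol := congrArg (h x) (P.polar_polarized ha hb hx)
    rw [map_add, hab, hba, map_smul, smul_eq_mul] at hpol
    rw [P.mul_comm x (mul x a), P.invariant]
    linarith
  set d := mul x (mul x a) - h x x • a
  have hd : d ∈ A₀ := A₀.sub_mem (P.mul₁₁_mem x hx _ (P.mul_comm x a ▸ P.mul_mem₁ ha x))
    (A₀.smul_mem _ ha)
  have hd_orth : ∀ b ∈ A₀, h d b = 0 := fun b hb ↦ by
    rw [map_sub, LinearMap.sub_apply, hform b hb, map_smul, LinearMap.smul_apply, smul_eq_mul,
      sub_self]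
  exact sub_eq_zero.mp (P.eq_zero_of_apply_self (hd_orth d hd))

variable [FiniteDimensional ℝ A]

theorem trace_mul_comp_mul_of_mem₀ (P : IsPolarAlgebra mul h A₀ A₁) {x : A} (hx : x ∈ A₀) :
    LinearMap.trace ℝ A (mul x ∘ₗ mul x) = h x x * finrank ℝ A₁ :=
  LinearMap.trace_eq_mul_finrank_of_eqOn P.isCompl
    (fun a ha ↦ by rw [LinearMap.comp_apply, P.mul₀₀ x hx a ha, map_zero]) (P.polar x hx)

theorem trace_mul_comp_mul_of_mem₁ (P : IsPolarAlgebra mul h A₀ A₁) {x : A} (hx : x ∈ A₁) :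
    LinearMap.trace ℝ A (mul x ∘ₗ mul x) = 2 * h x x * finrank ℝ A₀ :=
  LinearMap.trace_comp_self_of_mapsTo_swap P.isCompl
    (fun a ha ↦ P.mul_comm a x ▸ P.mul_mem₁ ha x) (P.mul₁₁_mem x hx)
    (fun _ ha ↦ P.mul_mul_of_mem₁_of_mem₀ hx ha)

theorem trace_mul_comp_mul_eq_zero (P : IsPolarAlgebra mul h A₀ A₁) {x₀ x₁ : A} (hx₀ : x₀ ∈ A₀)
    (hx₁ : x₁ ∈ A₁) : LinearMap.trace ℝ A (mul x₀ ∘ₗ mul x₁) = 0 :=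
  LinearMap.trace_eq_zero_of_mapsTo_swap P.isCompl (fun _ _ ↦ P.mul_mem₁ hx₀ _)
    (fun y hy ↦ by
      rw [SetLike.mem_coe, LinearMap.comp_apply, P.mul₀₀ x₀ hx₀ _ (P.mul₁₁_mem x₁ hx₁ y hy)]
      exact A₀.zero_mem)

end IsPolarAlgebra

theorem polar_trace_formula
    {A : Type*} [AddCommGroup A] [Module ℝ A] [FiniteDimensional ℝ A]
    (mul : A →ₗ[ℝ] A →ₗ[ℝ] A)
    (hcomm : ∀ x y : A, mul x y = mul y x)
    (h : A →ₗ[ℝ] A →ₗ[ℝ] ℝ)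
    (hsymm : ∀ x y : A, h x y = h y x)
    (hpos : ∀ x : A, x ≠ 0 → 0 < h x x)
    (hinv : ∀ x y z : A, h (mul x y) z = h x (mul y z))
    (A₀ A₁ : Submodule ℝ A)
    (hsum : A₀ ⊔ A₁ = ⊤) (hind : A₀ ⊓ A₁ = ⊥)
    (horth : ∀ x ∈ A₀, ∀ y ∈ A₁, h x y = 0)
    (hmul00 : ∀ x ∈ A₀, ∀ y ∈ A₀, mul x y = 0)
    (hmul11 : ∀ x ∈ A₁, ∀ y ∈ A₁, mul x y ∈ A₀)
    (hpolar : ∀ x ∈ A₀, ∀ y ∈ A₁, mul x (mul x y) = h x x • y) :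
    ∀ x₀ ∈ A₀, ∀ x₁ ∈ A₁,
      LinearMap.trace ℝ A (mul (x₀ + x₁) ∘ₗ mul (x₀ + x₁))
        = h x₀ x₀ * (Module.finrank ℝ A₁ : ℝ) + 2 * h x₁ x₁ * (Module.finrank ℝ A₀ : ℝ) := by
  intro x₀ hx₀ x₁ hx₁
  have P : IsPolarAlgebra mul h A₀ A₁ :=
    { mul_comm := hcomm, symm := hsymm, pos := hpos, invariant := hinv,
      isCompl := ⟨disjoint_iff.mpr hind, codisjoint_iff.mpr hsum⟩, orthogonal := horth,
      mul₀₀ := hmul00, mul₁₁_mem := hmul11, polar := hpolar }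
  have hcross : LinearMap.trace ℝ A (mul x₁ ∘ₗ mul x₀) = 0 := by
    rw [LinearMap.trace_comp_comm', P.trace_mul_comp_mul_eq_zero hx₀ hx₁]
  rw [map_add, LinearMap.add_comp, LinearMap.comp_add, LinearMap.comp_add, map_add, map_add,
    map_add, P.trace_mul_comp_mul_of_mem₀ hx₀, P.trace_mul_comp_mul_eq_zero hx₀ hx₁, hcross,
    P.trace_mul_comp_mul_of_mem₁ hx₁]
  ring
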